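/- Let n ≥ 2, let C₁, C₂ > 0, and let μ₁, …, μₙ be positive real numbers with Σ_{j=1}^{n} 1/μ_j ≤ 1/C₁ and Π_{j=1}^{n} μ_j ≤ C₁ · C₂^(n−1) · (n−1)^(n−1). Then for every index i, C₁ ≤ μ_i ≤ C₁^(2−n) · C₂^(n−1). -/
import Mathlib


open BigOperators

theorem stmt_3 (n : ℕ) (hn : 2 ≤ n) (C₁ C₂ : ℝ) (hC₁ : 0 < C₁) (hC₂ : 0 < C₂)
    (μ : Fin n → ℝ) (hμ : ∀ i, 0 < μ i)
    (hsum : ∑ i, 1 / μ i ≤ 1 / C₁)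
    (hprod : ∏ i, μ i ≤ C₁ * C₂ ^ (n - 1) * ((n : ℝ) - 1) ^ (n - 1)) :
    ∀ i, C₁ ≤ μ i ∧ μ i ≤ C₁ ^ ((2 : ℤ) - n) * C₂ ^ (n - 1) := by
  intro i
  set k : ℕ := n - 1 with hkdef
  have hk1 : 1 ≤ k := by omega
  have hkpos : (0:ℝ) < (k:ℝ) := by exact_mod_cast hk1.trans_lt' (by norm_num)
  have hμC : ∀ j, C₁ ≤ μ j := by
    intro j
    have h1 : 1 / μ j ≤ ∑ l, 1 / μ l :=
      Finset.single_le_sum (f := fun l => 1 / μ l)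
        (fun l _ => (one_div_pos.mpr (hμ l)).le) (Finset.mem_univ j)
    have := h1.trans hsum
    rw [div_le_div_iff₀ (hμ j) hC₁, one_mul, one_mul] at this
    exact this
  refine ⟨hμC i, ?_⟩
  set s : Finset (Fin n) := Finset.univ.erase i with hs
  have hcard : s.card = k := by
    simp [hs, Finset.card_erase_of_mem, hkdef, Finset.card_univ]
  -- AM-GM on the complementary indices
  have hw : ∑ j ∈ s, ((k:ℝ)⁻¹) = 1 := by
    rw [Finset.sum_const, hcard, nsmul_eq_mul, mul_inv_cancel₀ hkpos.ne']
  have hgm := Real.geom_mean_le_arith_mean_weighted s (fun _ => (k:ℝ)⁻¹)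
    (fun j => 1 / μ j) (fun j _ => by positivity) hw (fun j _ => (one_div_pos.mpr (hμ j)).le)
  have hsum' : ∑ j ∈ s, 1 / μ j ≤ 1 / C₁ :=
    le_trans (Finset.sum_le_sum_of_subset_of_nonneg (Finset.subset_univ s)
      (fun j _ _ => (one_div_pos.mpr (hμ j)).le)) hsum
  have hRHS : ∑ j ∈ s, ((k:ℝ)⁻¹) * (1 / μ j) ≤ (k:ℝ)⁻¹ * (1 / C₁) := by
    rw [← Finset.mul_sum]
    exact mul_le_mul_of_nonneg_left hsum' (by positivity)
  have hL : (∏ j ∈ s, (1 / μ j) ^ ((k:ℝ)⁻¹)) ^ k = ∏ j ∈ s, (1 / μ j) := by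
    rw [← Finset.prod_pow]
    refine Finset.prod_congr rfl fun j _ => ?_
    rw [← Real.rpow_natCast ((1 / μ j) ^ ((k:ℝ)⁻¹)) k,
      ← Real.rpow_mul (one_div_pos.mpr (hμ j)).le, inv_mul_cancel₀ hkpos.ne', Real.rpow_one]
  have h2 : ∏ j ∈ s, (1 / μ j) ≤ ((k:ℝ)⁻¹ * (1 / C₁)) ^ k := by
    rw [← hL]
    exact pow_le_pow_left₀ (Finset.prod_nonneg fun j _ => Real.rpow_nonneg (one_div_pos.mpr (hμ j)).le _)
      (hgm.trans hRHS) k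
  have hprodpos : (0:ℝ) < ∏ j ∈ s, μ j := Finset.prod_pos fun j _ => hμ j
  have h3 : (C₁ * (k:ℝ)) ^ k ≤ ∏ j ∈ s, μ j := by
    have hinv : (∏ j ∈ s, μ j)⁻¹ ≤ ((C₁ * (k:ℝ)) ^ k)⁻¹ := by
      calc (∏ j ∈ s, μ j)⁻¹ = ∏ j ∈ s, (1 / μ j) := by
            rw [← Finset.prod_inv_distrib]; simp
        _ ≤ ((k:ℝ)⁻¹ * (1 / C₁)) ^ k := h2
        _ = ((C₁ * (k:ℝ)) ^ k)⁻¹ := by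
            rw [← inv_pow]; congr 1; field_simp
    exact (inv_le_inv₀ hprodpos (by positivity)).mp hinv
  have hfull : μ i * ∏ j ∈ s, μ j = ∏ j, μ j := Finset.mul_prod_erase _ _ (Finset.mem_univ i)
  have hn1 : ((n:ℝ) - 1) = (k:ℝ) := by
    have : (k:ℝ) + 1 = (n:ℝ) := by exact_mod_cast (by omega : k + 1 = n)
    linarith
  have hμi : μ i * (C₁ * (k:ℝ)) ^ k ≤ C₁ * C₂ ^ k * (k:ℝ) ^ k := by
    calc μ i * (C₁ * (k:ℝ)) ^ k ≤ μ i * ∏ j ∈ s, μ j :=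
          mul_le_mul_of_nonneg_left h3 (hμ i).le
      _ = ∏ j, μ j := hfull
      _ ≤ C₁ * C₂ ^ k * (k:ℝ) ^ k := by rw [← hn1]; exact hprod
  have hfin : μ i ≤ C₁ * C₂ ^ k / C₁ ^ k := by
    rw [mul_pow] at hμi
    rw [le_div_iff₀ (pow_pos hC₁ k)]
    nlinarith [pow_pos hkpos k, pow_pos hC₁ k]
  have hz : C₁ ^ ((2:ℤ) - n) * C₂ ^ k = C₁ * C₂ ^ k / C₁ ^ k := by
    have h2n : (2:ℤ) - n = 1 - (k:ℤ) := by omega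
    rw [h2n, zpow_sub₀ hC₁.ne', zpow_one, zpow_natCast]
    ring
  rw [hz]
  exact hfin
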